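/- arXiv:1507.03958 — 4 statements merged into one kernel-verified Lean document; each statement's English description precedes it below -/
import Mathlib

section
/- For natural numbers n ≥ p ≥ 1 with n ≥ p+1, define A(n,p) = ∑_{i=0}^{⌊(n-p)/2⌋} C(n-2i, p). Then 2·A(n,p) = C(n+1, p+1) + A(n-1, p-1). -/
def A (n p : ℕ) : ℕ := ∑ i ∈ Finset.range ((n - p) / 2 + 1), (n - 2 * i).choose p

lemma recA (n p : ℕ) (h : p ≤ n) : A (n + 2) p = (n + 2).choose p + A n p := by
  unfold A
  have h2 : (n + 2 - p) / 2 = (n - p) / 2 + 1 := by omega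
  rw [h2, Finset.sum_range_succ']
  rw [show n + 2 - 2 * 0 = n + 2 from by omega, add_comm]
  congr 1
  apply Finset.sum_congr rfl
  intro i _
  congr 1
  omega

theorem aux : ∀ d q : ℕ, 2 * A (q + 2 + d) (q + 1) = (q + 3 + d).choose (q + 2) + A (q + 1 + d) q
  | 0, q => by
    have h1 : (q + 2 + 0 - (q + 1)) / 2 = 0 := by omega
    have h2 : (q + 1 + 0 - q) / 2 = 0 := by omega
    simp [A, h1, h2]
    omega
  | 1, q => by
    have h1 : (q + 2 + 1 - (q + 1)) / 2 = 1 := by omega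
    have h2 : (q + 1 + 1 - q) / 2 = 1 := by omega
    simp [A, h1, h2, Finset.sum_range_succ]
    have p2 : (q + 3).choose (q + 2) = (q + 2).choose (q + 1) + (q + 2).choose (q + 2) :=
      Nat.choose_succ_succ (q + 2) (q + 1)
    have p1 : (q + 3 + 1).choose (q + 2) = (q + 3).choose (q + 1) + (q + 3).choose (q + 2) :=
      Nat.choose_succ_succ (q + 3) (q + 1)
    have p3 : (q + 3).choose (q + 1) = (q + 2).choose q + (q + 2).choose (q + 1) :=
      Nat.choose_succ_succ (q + 2) q
    have p4 : (q + 2 + 1).choose (q + 1) = (q + 2).choose q + (q + 2).choose (q + 1) :=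
      Nat.choose_succ_succ (q + 2) q
    have p5 : (q + 1 + 1).choose q = (q + 2).choose q := rfl
    have p6 : (q + 2).choose (q + 2) = 1 := Nat.choose_self _
    omega
  | (d + 2), q => by
    have ih := aux d q
    show 2 * A (q + 2 + d + 2) (q + 1) = (q + 3 + d + 2).choose (q + 2) + A (q + 1 + d + 2) q
    have r1 : A (q + 2 + d + 2) (q + 1) = (q + 3 + d + 1).choose (q + 1) + A (q + 2 + d) (q + 1) := by
      have := recA (q + 2 + d) (q + 1) (by omega)
      rw [show q + 3 + d + 1 = q + 2 + d + 2 from by omega]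
      exact this
    have r2 : A (q + 1 + d + 2) q = (q + 3 + d).choose q + A (q + 1 + d) q := by
      have := recA (q + 1 + d) q (by omega)
      rw [show q + 3 + d = q + 1 + d + 2 from by omega]
      exact this
    have p1 : (q + 3 + d + 2).choose (q + 2)
        = (q + 3 + d + 1).choose (q + 1) + (q + 3 + d + 1).choose (q + 2) :=
      Nat.choose_succ_succ (q + 3 + d + 1) (q + 1)
    have p2 : (q + 3 + d + 1).choose (q + 2)
        = (q + 3 + d).choose (q + 1) + (q + 3 + d).choose (q + 2) :=
      Nat.choose_succ_succ (q + 3 + d) (q + 1)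
    have p3 : (q + 3 + d + 1).choose (q + 1)
        = (q + 3 + d).choose q + (q + 3 + d).choose (q + 1) :=
      Nat.choose_succ_succ (q + 3 + d) q
    omega

theorem stmt_6 (n p : ℕ) (hp : 1 ≤ p) (h : p + 1 ≤ n) :
    2 * A n p = (n + 1).choose (p + 1) + A (n - 1) (p - 1) := by
  obtain ⟨q, rfl⟩ : ∃ q, p = q + 1 := ⟨p - 1, by omega⟩
  obtain ⟨d, rfl⟩ : ∃ d, n = q + 2 + d := ⟨n - q - 2, by omega⟩
  have := aux d q
  rw [show q + 2 + d - 1 = q + 1 + d from by omega,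
      show q + 1 - 1 = q from by omega,
      show q + 2 + d + 1 = q + 3 + d from by omega]
  exact this
end

section
/- Let 1 ≤ ℓ ≤ k be natural numbers and let d be a real number. Then ∑_{j=ℓ}^{k} (-1)^{j-ℓ} C(k,j) C(j-1,ℓ-1) d^j = ℓ·C(k,ℓ) · ∫_0^d x^{ℓ-1}(1-x)^{k-ℓ} dx. -/
/-!
Expanding `(1 - x)^(k - l)` by the binomial theorem and integrating term by term turns the
right-hand side into a polynomial in `d`; its coefficients match those on the left by the
identity `j * C(k, j) * C(j - 1, l - 1) = l * C(k, l) * C(k - l, j - l)`.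
-/

open Finset

theorem Nat.mul_choose_mul_choose_pred {k j l : ℕ} (hl : 0 < l) (hlj : l ≤ j) :
    j * (k.choose j * (j - 1).choose (l - 1)) = l * k.choose l * (k - l).choose (j - l) := by
  have hj : j * (j - 1).choose (l - 1) = j.choose l * l := by
    have := Nat.add_one_mul_choose_eq (j - 1) (l - 1)
    rwa [Nat.sub_add_cancel (hl.trans_le hlj), Nat.sub_add_cancel hl] at this
  calc j * (k.choose j * (j - 1).choose (l - 1))
      = k.choose j * j.choose l * l := by rw [mul_left_comm, hj, mul_assoc]
    _ = l * k.choose l * (k - l).choose (j - l) := by rw [Nat.choose_mul hlj]; ring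

theorem integral_pow_mul_one_sub_pow (m n : ℕ) (d : ℝ) :
    ∫ x in (0 : ℝ)..d, x ^ m * (1 - x) ^ n =
      ∑ i ∈ range (n + 1), (-1 : ℝ) ^ i * n.choose i * d ^ (m + i + 1) / (m + i + 1) := by
  have expand (x : ℝ) :
      x ^ m * (1 - x) ^ n = ∑ i ∈ range (n + 1), (-1 : ℝ) ^ i * n.choose i * x ^ (m + i) := by
    rw [sub_eq_neg_add, add_pow, mul_sum]
    refine sum_congr rfl fun i _ => ?_
    rw [neg_pow]
    ring
  simp_rw [expand]
  rw [intervalIntegral.integral_finsetSum fun i _ =>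
    (intervalIntegral.intervalIntegrable_pow _).const_mul _]
  refine sum_congr rfl fun i _ => ?_
  rw [intervalIntegral.integral_const_mul, integral_pow, zero_pow (Nat.succ_ne_zero _)]
  push_cast
  ring

theorem stmt_9_general (l k : ℕ) (hl : 1 ≤ l) (d : ℝ) :
    ∑ j ∈ Finset.Icc l k,
        (-1 : ℝ) ^ (j - l) * (k.choose j : ℝ) * ((j - 1).choose (l - 1) : ℝ) * d ^ j
      = (l : ℝ) * (k.choose l : ℝ) * ∫ x in (0 : ℝ)..d, x ^ (l - 1) * (1 - x) ^ (k - l) := by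
  rcases lt_or_ge k l with hkl | hlk
  · simp [Finset.Icc_eq_empty_of_lt hkl, Nat.choose_eq_zero_of_lt hkl]
  rw [integral_pow_mul_one_sub_pow, mul_sum, ← Ico_add_one_right_eq_Icc, sum_Ico_eq_sum_range,
    Nat.sub_add_comm hlk]
  refine sum_congr rfl fun i _ => ?_
  have coeff : ((l : ℝ) + i) * (k.choose (l + i) * (l + i - 1).choose (l - 1)) =
      l * k.choose l * (k - l).choose i := by
    have := Nat.mul_choose_mul_choose_pred (k := k) hl (Nat.le_add_right l i)
    rw [add_tsub_cancel_left] at this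
    exact_mod_cast this
  have hexp : l - 1 + i + 1 = l + i := by omega
  have hden : ((l - 1 : ℕ) : ℝ) + i + 1 = l + i := by push_cast [Nat.cast_sub hl]; ring
  rw [add_tsub_cancel_left, hexp, hden]
  field_simp
  linear_combination d ^ (l + i) * coeff

theorem stmt_9 (l k : ℕ) (hl : 1 ≤ l) (hk : l ≤ k) (d : ℝ) :
    ∑ j ∈ Finset.Icc l k,
        (-1 : ℝ) ^ (j - l) * (k.choose j : ℝ) * ((j - 1).choose (l - 1) : ℝ) * d ^ j
      = (l : ℝ) * (k.choose l : ℝ) * ∫ x in (0 : ℝ)..d, x ^ (l - 1) * (1 - x) ^ (k - l) :=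
  stmt_9_general l k hl d
end

section
/- For all natural numbers 1 ≤ ℓ ≤ k, the identity ∑_{j=ℓ}^{k} (-1)^{j-ℓ} C(k,j) C(j-1,ℓ-1) 2^j = 1 + (-1)^{k+1} ∑_{h=0}^{ℓ-1} C(k,h) (-2)^h holds in the integers. -/
/-!
Write `S l` for the left-hand side. Pascal's rule `C(j, l) = C(j-1, l-1) + C(j-1, l)` gives
`S l - S (l+1) = ∑ j, (-1)^(j-l) C(k, j) C(j, l) 2^j`, and `C(k, j) C(j, l) = C(k, l) C(k-l, j-l)`
turns this into the binomial expansion `(-1)^k C(k, l) (-2)^l`, which is exactly the increment of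
the right-hand side in `l`. The case `l = 1` is the binomial theorem for `(1 - 2)^k`.
-/

open Finset

theorem sum_Icc_choose_mul_choose_mul_pow {R : Type*} [CommSemiring R] (x : R) (m k : ℕ) :
    ∑ j ∈ Icc m k, (k.choose j * j.choose m : R) * x ^ (j - m)
      = k.choose m * (1 + x) ^ (k - m) := by
  rcases lt_or_ge k m with hkm | hmk
  · simp [Nat.choose_eq_zero_of_lt hkm, Icc_eq_empty_of_lt hkm]
  rw [← Ico_add_one_right_eq_Icc, sum_Ico_eq_sum_range, Nat.sub_add_comm hmk, add_comm 1 x,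
    add_pow, mul_sum]
  refine sum_congr rfl fun d _ => ?_
  have h := Nat.choose_mul (n := k) (k := m + d) (s := m) (by omega)
  rw [Nat.add_sub_cancel_left] at h
  rw [Nat.add_sub_cancel_left, one_pow, mul_one, ← Nat.cast_mul, h]
  push_cast
  ring

theorem neg_one_pow_sub_mul_choose (k l : ℕ) :
    (-1 : ℤ) ^ (k - l) * k.choose l = (-1) ^ (k + l) * k.choose l := by
  rcases lt_or_ge k l with hkl | hlk
  · simp [Nat.choose_eq_zero_of_lt hkl]
  rw [show k + l = k - l + 2 * l by omega, pow_add, pow_mul, neg_one_sq, one_pow, mul_one]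

theorem sum_Icc_neg_one_pow_choose_mul_choose_mul_two_pow (l k : ℕ) :
    ∑ j ∈ Icc l k, (-1 : ℤ) ^ (j - l) * k.choose j * j.choose l * 2 ^ j
      = (-1) ^ k * k.choose l * (-2) ^ l := by
  calc ∑ j ∈ Icc l k, (-1 : ℤ) ^ (j - l) * k.choose j * j.choose l * 2 ^ j
      = 2 ^ l * ∑ j ∈ Icc l k, (k.choose j * j.choose l : ℤ) * (-2) ^ (j - l) := by
        rw [mul_sum]
        refine sum_congr rfl fun j hj => ?_
        rw [neg_pow (2 : ℤ), ← Nat.add_sub_of_le (mem_Icc.1 hj).1, pow_add,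
          Nat.add_sub_cancel_left]
        ring
    _ = (-1) ^ (k - l) * k.choose l * 2 ^ l := by
        rw [sum_Icc_choose_mul_choose_mul_pow, show (1 : ℤ) + -2 = -1 by norm_num]
        ring
    _ = (-1) ^ k * k.choose l * (-2) ^ l := by
        rw [neg_one_pow_sub_mul_choose, neg_pow (2 : ℤ), pow_add]
        ring

theorem neg_one_pow_mul_choose_pred_succ (l j : ℕ) (hl : 1 ≤ l) (hj : l ≤ j) :
    (-1 : ℤ) ^ (j - (l + 1)) * (j - 1).choose l
      = (-1) ^ (j - l) * (j - 1).choose (l - 1) - (-1) ^ (j - l) * j.choose l := by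
  obtain ⟨i, rfl⟩ := Nat.exists_eq_add_of_le' hl
  obtain ⟨_ | d, rfl⟩ := Nat.exists_eq_add_of_le hj
  · simp
  · have hc := Nat.choose_succ_succ' (i + 1 + d) i
    rw [show i + 1 + (d + 1) - (i + 1 + 1) = d by omega,
      show i + 1 + (d + 1) - (i + 1) = d + 1 by omega,
      show i + 1 + (d + 1) - 1 = i + 1 + d by omega, Nat.add_sub_cancel,
      show i + 1 + (d + 1) = i + 1 + d + 1 by omega, hc]
    push_cast
    ring

theorem sum_Icc_one_neg_one_pow_choose_mul_two_pow (k : ℕ) :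
    ∑ j ∈ Icc 1 k, (-1 : ℤ) ^ (j - 1) * k.choose j * 2 ^ j = 1 - (-1) ^ k := by
  have h := sum_Icc_neg_one_pow_choose_mul_choose_mul_two_pow 0 k
  rw [Icc_eq_cons_Ioc (Nat.zero_le k), sum_cons, ← Icc_add_one_left_eq_Ioc] at h
  simp only [zero_add, Nat.sub_zero, Nat.choose_zero_right, Nat.cast_one, mul_one, pow_zero] at h
  have hshift : ∑ j ∈ Icc 1 k, (-1 : ℤ) ^ (j - 1) * k.choose j * 2 ^ j
      = -∑ j ∈ Icc 1 k, (-1 : ℤ) ^ j * k.choose j * 2 ^ j := by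
    rw [← sum_neg_distrib]
    refine sum_congr rfl fun j hj => ?_
    rw [← Nat.sub_add_cancel (mem_Icc.1 hj).1, Nat.add_sub_cancel, pow_succ]
    ring
  rw [hshift]
  linear_combination -h

theorem sum_Icc_succ_neg_one_pow_choose_mul_choose_pred (l k : ℕ) (hl : 1 ≤ l) :
    ∑ j ∈ Icc (l + 1) k, (-1 : ℤ) ^ (j - (l + 1)) * k.choose j * (j - 1).choose l * 2 ^ j
      = ∑ j ∈ Icc l k, (-1 : ℤ) ^ (j - l) * k.choose j * (j - 1).choose (l - 1) * 2 ^ j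
        + (-1) ^ (k + 1) * k.choose l * (-2) ^ l := by
  have hext :
      ∑ j ∈ Icc (l + 1) k, (-1 : ℤ) ^ (j - (l + 1)) * k.choose j * (j - 1).choose l * 2 ^ j
      = ∑ j ∈ Icc l k, (-1 : ℤ) ^ (j - (l + 1)) * k.choose j * (j - 1).choose l * 2 ^ j := by
    refine sum_subset (Icc_subset_Icc_left l.le_succ) fun j hj hj' => ?_
    have hjl : j = l := by simp only [mem_Icc] at hj hj'; omega
    simp [hjl, Nat.choose_eq_zero_of_lt (Nat.sub_lt hl one_pos)]
  have hpascal : ∀ j ∈ Icc l k,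
      (-1 : ℤ) ^ (j - (l + 1)) * k.choose j * (j - 1).choose l * 2 ^ j
        = (-1) ^ (j - l) * k.choose j * (j - 1).choose (l - 1) * 2 ^ j
          - (-1) ^ (j - l) * k.choose j * j.choose l * 2 ^ j := fun j hj => by
    linear_combination
      (k.choose j * 2 ^ j : ℤ) * neg_one_pow_mul_choose_pred_succ l j hl (mem_Icc.1 hj).1
  rw [hext, sum_congr rfl hpascal, sum_sub_distrib,
    sum_Icc_neg_one_pow_choose_mul_choose_mul_two_pow]
  ring

theorem stmt_11_general (l k : ℕ) (hl : 1 ≤ l) :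
    ∑ j ∈ Finset.Icc l k,
        (-1 : ℤ) ^ (j - l) * (k.choose j : ℤ) * ((j - 1).choose (l - 1) : ℤ) * 2 ^ j
      = 1 + (-1) ^ (k + 1) * ∑ h ∈ Finset.range l, (k.choose h : ℤ) * (-2) ^ h := by
  induction l, hl using Nat.le_induction with
  | base =>
    simp only [Nat.sub_self, Nat.choose_zero_right, Nat.cast_one, mul_one,
      sum_Icc_one_neg_one_pow_choose_mul_two_pow, sum_range_one, pow_zero, pow_succ]
    ring
  | succ l hl ih =>
    rw [Nat.add_sub_cancel, sum_Icc_succ_neg_one_pow_choose_mul_choose_pred l k hl, ih,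
      sum_range_succ]
    ring

theorem stmt_11 (l k : ℕ) (hl : 1 ≤ l) (hk : l ≤ k) :
    ∑ j ∈ Finset.Icc l k,
        (-1 : ℤ) ^ (j - l) * (k.choose j : ℤ) * ((j - 1).choose (l - 1) : ℤ) * 2 ^ j
      = 1 + (-1) ^ (k + 1) * ∑ h ∈ Finset.range l, (k.choose h : ℤ) * (-2) ^ h :=
  stmt_11_general l k hl
end

section
/- Let 1 ≤ ℓ ≤ k be natural numbers and d a positive integer. Then ∑_{j=ℓ}^{k} (-1)^{j-ℓ} C(k,j) C(j-1,ℓ-1) d^j is an integer whose absolute value is at most C(k-1,ℓ-1)·(d^k + k - 1), provided ℓ < k. -/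
/-!
Write `F = chiPoly l k` and `C = C(k-1, l-1)`. The identity
`j C(k,j) C(j-1,l-1) = k C C(k-l,j-l)` and the binomial theorem give
`F'(x) = k C x^(l-1) (1-x)^(k-l)`, the integrand of the integral representation, and `F 0 = 0`.
On `[0, 1]` this derivative is bounded by `k C`, so `|F 1| ≤ k C`; on `[1, d]` it is bounded in
absolute value by `k C x^(k-1)`, the derivative of `C x^k`, so `|F d| ≤ k C + C (d^k - 1)`.
-/

open Finset

theorem Nat.mul_choose_mul_choose_sub_one {j k l : ℕ} (hl : 1 ≤ l) (hlj : l ≤ j) :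
    j * k.choose j * (j - 1).choose (l - 1)
      = k * (k - 1).choose (l - 1) * (k - l).choose (j - l) := by
  have hpull : j * k.choose j = k * (k - 1).choose (j - 1) := by
    obtain ⟨i, rfl⟩ : ∃ i, j = i + 1 := ⟨j - 1, by omega⟩
    rcases k with _ | m
    · simp
    · simpa [mul_comm] using (Nat.add_one_mul_choose_eq m i).symm
  have hsplit := Nat.choose_mul (n := k - 1) (k := j - 1) (s := l - 1) (by omega)
  rw [show k - 1 - (l - 1) = k - l by omega, show j - 1 - (l - 1) = j - l by omega] at hsplit
  rw [hpull, mul_assoc, hsplit, mul_assoc]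

theorem sum_Icc_choose_mul_deriv_pow {R : Type*} [CommRing R] {l k : ℕ} (hl : 1 ≤ l)
    (hlk : l ≤ k) (x : R) :
    ∑ j ∈ Icc l k, (-1) ^ (j - l) * (k.choose j : R) * ((j - 1).choose (l - 1) : R)
        * ((j : R) * x ^ (j - 1))
      = k * (k - 1).choose (l - 1) * x ^ (l - 1) * (1 - x) ^ (k - l) := by
  rw [← Ico_add_one_right_eq_Icc, sum_Ico_eq_sum_range,
    show k + 1 - l = k - l + 1 by omega, ← neg_add_eq_sub, add_pow, mul_sum]
  refine sum_congr rfl fun i _ => ?_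
  rw [Nat.add_sub_cancel_left, show l + i - 1 = l - 1 + i by omega, pow_add, neg_pow, one_pow]
  have key : ((l + i : ℕ) : R) * k.choose (l + i) * (l - 1 + i).choose (l - 1)
      = k * (k - 1).choose (l - 1) * (k - l).choose i := by
    have h := Nat.mul_choose_mul_choose_sub_one (k := k) hl (Nat.le_add_right l i)
    rw [Nat.add_sub_cancel_left, show l + i - 1 = l - 1 + i by omega] at h
    exact_mod_cast congrArg (Nat.cast : ℕ → R) h
  linear_combination (-1) ^ i * x ^ (l - 1) * x ^ i * key

noncomputable def chiPoly (l k : ℕ) (x : ℝ) : ℝ :=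
  ∑ j ∈ Icc l k, (-1) ^ (j - l) * (k.choose j : ℝ) * ((j - 1).choose (l - 1) : ℝ) * x ^ j

theorem chiPoly_zero {l : ℕ} (hl : 1 ≤ l) (k : ℕ) : chiPoly l k 0 = 0 :=
  sum_eq_zero fun j hj => by
    rw [zero_pow (by have := (mem_Icc.mp hj).1; omega), mul_zero]

theorem hasDerivAt_chiPoly {l k : ℕ} (hl : 1 ≤ l) (hlk : l ≤ k) (x : ℝ) :
    HasDerivAt (chiPoly l k)
      (k * (k - 1).choose (l - 1) * x ^ (l - 1) * (1 - x) ^ (k - l)) x := by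
  rw [← sum_Icc_choose_mul_deriv_pow hl hlk]
  exact HasDerivAt.fun_sum fun j _ => (hasDerivAt_pow j x).const_mul _

theorem abs_pow_mul_one_sub_pow_le_one {x : ℝ} (h0 : 0 ≤ x) (h1 : x ≤ 1) (a b : ℕ) :
    |x ^ a * (1 - x) ^ b| ≤ 1 := by
  have h1' : 0 ≤ 1 - x := sub_nonneg.mpr h1
  rw [abs_of_nonneg (by positivity)]
  exact mul_le_one₀ (pow_le_one₀ h0 h1) (by positivity) (pow_le_one₀ h1' (by linarith))

theorem abs_pow_mul_one_sub_pow_le_pow {x : ℝ} (h1 : 1 ≤ x) (a b : ℕ) :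
    |x ^ a * (1 - x) ^ b| ≤ x ^ (a + b) := by
  rw [abs_mul, abs_pow, abs_pow, abs_of_nonneg (by linarith), abs_sub_comm,
    abs_of_nonneg (by linarith), pow_add]
  gcongr
  linarith

theorem abs_chiPoly_one_le {l k : ℕ} (hl : 1 ≤ l) (hlk : l ≤ k) :
    |chiPoly l k 1| ≤ k * (k - 1).choose (l - 1) := by
  set c : ℝ := k * (k - 1).choose (l - 1)
  have hB : ∀ x, HasDerivAt (fun y => c * y) c x := fun x => by
    simpa using (hasDerivAt_id x).const_mul c
  have hbound := image_norm_le_of_norm_deriv_right_le_deriv_boundary (a := 0) (b := 1)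
    (fun x _ => (hasDerivAt_chiPoly hl hlk x).continuousAt.continuousWithinAt)
    (fun x _ => (hasDerivAt_chiPoly hl hlk x).hasDerivWithinAt)
    (by simp [chiPoly_zero hl]) hB
    (fun x hx => by
      rw [Real.norm_eq_abs, mul_assoc, abs_mul, abs_of_nonneg (by positivity : 0 ≤ c)]
      exact mul_le_of_le_one_right (by positivity)
        (abs_pow_mul_one_sub_pow_le_one hx.1 hx.2.le _ _))
    (Set.right_mem_Icc.mpr zero_le_one)
  simpa using hbound

theorem abs_chiPoly_le {l k : ℕ} (hl : 1 ≤ l) (hlk : l ≤ k) {x : ℝ} (hx : 1 ≤ x) :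
    |chiPoly l k x| ≤ ((k - 1).choose (l - 1) : ℝ) * (x ^ k + k - 1) := by
  set C : ℝ := ((k - 1).choose (l - 1) : ℝ)
  have hB : ∀ y : ℝ, HasDerivAt (fun z => C * (z ^ k + k - 1)) (k * C * y ^ (k - 1)) y :=
    fun y => ((((hasDerivAt_pow k y).add_const (k : ℝ)).sub_const 1).const_mul C).congr_deriv
      (by ring)
  refine image_norm_le_of_norm_deriv_right_le_deriv_boundary (a := 1) (b := x)
    (fun y _ => (hasDerivAt_chiPoly hl hlk y).continuousAt.continuousWithinAt)
    (fun y _ => (hasDerivAt_chiPoly hl hlk y).hasDerivWithinAt)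
    ?_ hB ?_ (Set.right_mem_Icc.mpr hx)
  · simpa [mul_comm] using abs_chiPoly_one_le hl hlk
  · intro y hy
    rw [Real.norm_eq_abs, mul_assoc, abs_mul, abs_of_nonneg (by positivity : (0 : ℝ) ≤ k * C),
      show k - 1 = l - 1 + (k - l) by omega]
    exact mul_le_mul_of_nonneg_left (abs_pow_mul_one_sub_pow_le_pow hy.1 _ _) (by positivity)

theorem stmt_17 (l k d : ℕ) (hl : 1 ≤ l) (hk : l < k) (hd : 1 ≤ d) :
    |∑ j ∈ Finset.Icc l k,
        (-1 : ℤ) ^ (j - l) * (k.choose j : ℤ) * ((j - 1).choose (l - 1) : ℤ) * (d : ℤ) ^ j|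
      ≤ ((k - 1).choose (l - 1) : ℤ) * ((d : ℤ) ^ k + (k : ℤ) - 1) := by
  have h := abs_chiPoly_le hl hk.le (Nat.one_le_cast.mpr hd)
  rw [← Int.cast_le (R := ℝ)]
  push_cast
  exact h
end
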